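/- arXiv:2208.11045 — 7 statements merged into one kernel-verified Lean document; each statement's English description precedes it below -/
import Mathlib

section
/- Let 𝕂 = ℝ or ℂ and let A and B be k × d matrices over 𝕂. Then A^* A = B^* B if and only if there exists a unitary k × k matrix U over 𝕂 (i.e., U^* U = I_k; an orthogonal matrix when 𝕂 = ℝ) such that B = U A. -/
open Matrix

private lemma toEuclideanLin_mul' {𝕂 : Type*} [RCLike 𝕂] {m n p : Type*}
    [Fintype m] [Fintype n] [Fintype p] [DecidableEq n] [DecidableEq p]
    (M : Matrix m n 𝕂) (N : Matrix n p 𝕂) :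
    Matrix.toEuclideanLin (M * N) =
      (Matrix.toEuclideanLin M).comp (Matrix.toEuclideanLin N) := by
  apply LinearMap.ext
  intro x
  simp [Matrix.toEuclideanLin_apply, Matrix.mulVec_mulVec]

private lemma toEuclideanLin_one' {𝕂 : Type*} [RCLike 𝕂] {m : Type*}
    [Fintype m] [DecidableEq m] :
    Matrix.toEuclideanLin (1 : Matrix m m 𝕂) = LinearMap.id := by
  apply LinearMap.ext
  intro x
  simp [Matrix.toEuclideanLin_apply]

/-- `A^* A = B^* B` if and only if `B = U A` for some unitary `U`, for `k × d` matrices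
over `𝕂 = ℝ` or `ℂ`. -/
theorem conjTranspose_mul_self_eq_iff_exists_unitary
    {𝕂 : Type*} [RCLike 𝕂] (k d : ℕ)
    (A B : Matrix (Fin k) (Fin d) 𝕂) :
    Aᴴ * A = Bᴴ * B ↔
      ∃ U : Matrix (Fin k) (Fin k) 𝕂, Uᴴ * U = 1 ∧ B = U * A := by
  constructor
  · intro h
    set TA := Matrix.toEuclideanLin A with hTA
    set TB := Matrix.toEuclideanLin B with hTB
    -- inner products agree
    have key : ∀ x y : EuclideanSpace 𝕂 (Fin d),
        (inner 𝕂 (TA x) (TA y) : 𝕂) = inner 𝕂 (TB x) (TB y) := by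
      intro x y
      rw [← LinearMap.adjoint_inner_right, ← LinearMap.adjoint_inner_right,
        hTA, hTB, ← Matrix.toEuclideanLin_conjTranspose_eq_adjoint,
        ← Matrix.toEuclideanLin_conjTranspose_eq_adjoint]
      have h1 : Matrix.toEuclideanLin Aᴴ (Matrix.toEuclideanLin A y)
          = Matrix.toEuclideanLin (Aᴴ * A) y := by
        rw [toEuclideanLin_mul']; rfl
      have h2 : Matrix.toEuclideanLin Bᴴ (Matrix.toEuclideanLin B y)
          = Matrix.toEuclideanLin (Bᴴ * B) y := by
        rw [toEuclideanLin_mul']; rfl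
      rw [h1, h2, h]
    have keynorm : ∀ x, ‖TA x‖ = ‖TB x‖ := by
      intro x
      rw [@norm_eq_sqrt_re_inner 𝕂, @norm_eq_sqrt_re_inner 𝕂, key]
    have hker : LinearMap.ker TA ≤ LinearMap.ker TB := by
      intro x hx
      rw [LinearMap.mem_ker] at hx ⊢
      rw [← norm_eq_zero, ← keynorm, hx, norm_zero]
    -- the isometry from range TA
    set S := LinearMap.range TA with hS
    set e := TA.quotKerEquivRange with he
    set L0 : S →ₗ[𝕂] EuclideanSpace 𝕂 (Fin k) :=
      (Submodule.liftQ (LinearMap.ker TA) TB hker).comp (e.symm : S →ₗ[𝕂] _) with hL0def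
    have hL0 : ∀ (x : EuclideanSpace 𝕂 (Fin d)) (hm : TA x ∈ S),
        L0 ⟨TA x, hm⟩ = TB x := by
      intro x hm
      have h1 : e (Submodule.Quotient.mk x) = ⟨TA x, hm⟩ := by
        apply Subtype.ext
        simp [he, LinearMap.quotKerEquivRange_apply_mk]
      have h2 : e.symm ⟨TA x, hm⟩ = Submodule.Quotient.mk x := by
        rw [LinearEquiv.symm_apply_eq, h1]
      simp [hL0def, h2]
    have hL0norm : ∀ s : S, ‖L0 s‖ = ‖s‖ := by
      rintro ⟨v, x, rfl⟩
      rw [hL0 x ⟨x, rfl⟩, ← keynorm]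
      simp [Submodule.coe_norm]
    set L : S →ₗᵢ[𝕂] EuclideanSpace 𝕂 (Fin k) := ⟨L0, hL0norm⟩ with hLdef
    set Uext := L.extend with hUext
    set U := Matrix.toEuclideanLin.symm (Uext.toLinearMap) with hUdef
    have hUlin : Matrix.toEuclideanLin U = Uext.toLinearMap := by
      rw [hUdef, LinearEquiv.apply_symm_apply]
    refine ⟨U, ?_, ?_⟩
    · apply Matrix.toEuclideanLin.injective
      rw [toEuclideanLin_mul', toEuclideanLin_one',
        Matrix.toEuclideanLin_conjTranspose_eq_adjoint, hUlin]
      apply LinearMap.ext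
      intro x
      apply ext_inner_right 𝕂
      intro y
      rw [LinearMap.comp_apply, LinearMap.adjoint_inner_left]
      exact Uext.inner_map_map x y
    · apply Matrix.toEuclideanLin.injective
      rw [← hTB, toEuclideanLin_mul', hUlin, ← hTA]
      apply LinearMap.ext
      intro x
      have hm : TA x ∈ S := LinearMap.mem_range_self _ x
      have : Uext (TA x) = L ⟨TA x, hm⟩ := L.extend_apply ⟨TA x, hm⟩
      rw [LinearMap.comp_apply]
      exact (this.trans (hL0 x hm)).symm ▸ (this.trans (hL0 x hm))
  · rintro ⟨U, hU, rfl⟩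
    rw [Matrix.conjTranspose_mul, Matrix.mul_assoc, ← Matrix.mul_assoc Uᴴ, hU, Matrix.one_mul]
end

section
/- Let 𝕂 = ℝ or ℂ, let d, N, k_1, …, k_N be positive integers, and set n = k_1 + ⋯ + k_N. Let A = (A_1, …, A_N) be a tuple of matrices A_i ∈ 𝕂^{k_i × d} satisfying A_i A_i^* = I_{k_i} for every i. Then ‖Σ_{i=1}^N A_i^* A_i‖² ≥ n²/d, where ‖·‖ is the Frobenius norm, and equality holds if and only if Σ_{i=1}^N A_i^* A_i = (n/d)·I_d. -/
open Matrix

/-- The fusion frame potential `FFP(A) = ‖S_A‖²`, the squared Frobenius norm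
`tr(S_A^* S_A)` of the frame operator `S_A = Σ_i A_i^* A_i`. -/
noncomputable def FFP {𝕂 : Type*} [RCLike 𝕂] {d N : ℕ} {k : Fin N → ℕ}
    (A : (i : Fin N) → Matrix (Fin (k i)) (Fin d) 𝕂) : ℝ :=
  RCLike.re (Matrix.trace ((∑ i : Fin N, (A i)ᴴ * A i)ᴴ * ∑ i : Fin N, (A i)ᴴ * A i))

lemma re_trace_conjTranspose_mul_self {𝕂 : Type*} [RCLike 𝕂] {d : ℕ}
    (M : Matrix (Fin d) (Fin d) 𝕂) :
    RCLike.re (Matrix.trace (Mᴴ * M)) = ∑ i, ∑ j, ‖M j i‖ ^ 2 := by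
  simp only [Matrix.trace, Matrix.diag, Matrix.mul_apply, Matrix.conjTranspose_apply, map_sum]
  refine Finset.sum_congr rfl fun i _ => Finset.sum_congr rfl fun j _ => ?_
  rw [RCLike.star_def, RCLike.conj_mul, ← RCLike.ofReal_pow]
  exact RCLike.ofReal_re _

lemma re_trace_cts_eq_zero_iff {𝕂 : Type*} [RCLike 𝕂] {d : ℕ}
    (M : Matrix (Fin d) (Fin d) 𝕂) :
    RCLike.re (Matrix.trace (Mᴴ * M)) = 0 ↔ M = 0 := by
  rw [re_trace_conjTranspose_mul_self]
  constructor
  · intro h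
    ext j i
    have h1 : ∀ i ∈ Finset.univ, (0:ℝ) ≤ ∑ j, ‖M j i‖ ^ 2 :=
      fun i _ => Finset.sum_nonneg fun j _ => sq_nonneg _
    have h2 := (Finset.sum_eq_zero_iff_of_nonneg h1).1 h i (Finset.mem_univ i)
    have h3 := (Finset.sum_eq_zero_iff_of_nonneg
      (fun j _ => sq_nonneg ‖M j i‖)).1 h2 j (Finset.mem_univ j)
    simpa [pow_eq_zero_iff] using h3
  · rintro rfl; simp

/-- **Welch-type lower bound for the fusion frame potential.** If each `A_i` has orthonormal
rows then `FFP(A) ≥ n²/d` with `n = Σ_i k_i`, and equality holds if and only if `A` is a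
tight fusion frame, i.e. `Σ_i A_i^* A_i = (n/d)·I_d`. -/
theorem ffp_welch_bound {𝕂 : Type*} [RCLike 𝕂]
    (d N : ℕ) (hd : 0 < d) (hN : 0 < N)
    (k : Fin N → ℕ) (hk : ∀ i, 0 < k i)
    (A : (i : Fin N) → Matrix (Fin (k i)) (Fin d) 𝕂)
    (hA : ∀ i, A i * (A i)ᴴ = 1) :
    ((∑ i : Fin N, k i : ℕ) : ℝ) ^ 2 / d ≤ FFP A ∧
      (FFP A = ((∑ i : Fin N, k i : ℕ) : ℝ) ^ 2 / d ↔
        ∑ i : Fin N, (A i)ᴴ * A i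
          = (((∑ i : Fin N, k i : ℕ) : 𝕂) / (d : 𝕂)) • (1 : Matrix (Fin d) (Fin d) 𝕂)) := by
  set n : ℕ := ∑ i : Fin N, k i with hn
  set S : Matrix (Fin d) (Fin d) 𝕂 := ∑ i : Fin N, (A i)ᴴ * A i with hSdef
  have hSH : Sᴴ = S := by
    rw [hSdef, Matrix.conjTranspose_sum]
    refine Finset.sum_congr rfl fun i _ => ?_
    rw [Matrix.conjTranspose_mul, Matrix.conjTranspose_conjTranspose]
  have htr : S.trace = (n : 𝕂) := by
    rw [hSdef, Matrix.trace_sum]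
    have : ∀ i, ((A i)ᴴ * A i).trace = (k i : 𝕂) := by
      intro i
      rw [Matrix.trace_mul_comm, hA i, Matrix.trace_one]
      simp
    simp only [this]
    push_cast [hn]
    ring
  set c : 𝕂 := (n : 𝕂) / (d : 𝕂) with hc
  have hcre : c = ((n / d : ℝ) : 𝕂) := by push_cast; ring
  set T : Matrix (Fin d) (Fin d) 𝕂 := S - c • 1 with hT
  have hTH : Tᴴ = T := by
    rw [hT, Matrix.conjTranspose_sub, hSH, Matrix.conjTranspose_smul,
      Matrix.conjTranspose_one, hcre]
    rw [RCLike.star_def, RCLike.conj_ofReal]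
  have hd' : (d : ℝ) ≠ 0 := Nat.cast_ne_zero.2 hd.ne'
  have key : RCLike.re (Matrix.trace (Tᴴ * T)) = FFP A - (n : ℝ) ^ 2 / d := by
    rw [hTH, hT]
    have expand : (S - c • 1) * (S - c • 1)
        = S * S - c • S - c • S + (c * c) • (1 : Matrix (Fin d) (Fin d) 𝕂) := by
      rw [Matrix.sub_mul, Matrix.mul_sub, Matrix.mul_sub]
      simp only [Matrix.smul_mul, Matrix.mul_smul, Matrix.one_mul, Matrix.mul_one,
        smul_smul]
      abel
    rw [expand]
    simp only [Matrix.trace_add, Matrix.trace_sub, Matrix.trace_smul, Matrix.trace_one,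
      map_add, map_sub, htr]
    have h1 : RCLike.re (c • (n : 𝕂)) = (n : ℝ) ^ 2 / d := by
      rw [hcre]
      simp only [smul_eq_mul]
      rw [RCLike.re_ofReal_mul]
      simp only [RCLike.natCast_re]
      field_simp
    have h2 : RCLike.re ((c * c) • (Fintype.card (Fin d) : 𝕂)) = (n : ℝ) ^ 2 / d := by
      rw [hcre]
      simp only [smul_eq_mul, Fintype.card_fin]
      rw [← RCLike.ofReal_mul, RCLike.re_ofReal_mul]
      simp only [RCLike.natCast_re]
      field_simp
    have hFFP : FFP A = RCLike.re (Matrix.trace (S * S)) := by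
      rw [FFP, ← hSdef, hSH]
    rw [h1, h2, hFFP]
    ring
  have hnonneg : 0 ≤ RCLike.re (Matrix.trace (Tᴴ * T)) := by
    rw [re_trace_conjTranspose_mul_self]
    exact Finset.sum_nonneg fun i _ => Finset.sum_nonneg fun j _ => sq_nonneg _
  constructor
  · linarith [key ▸ hnonneg]
  · rw [show (FFP A = (n : ℝ) ^ 2 / d) ↔ RCLike.re (Matrix.trace (Tᴴ * T)) = 0 by
      rw [key]; constructor <;> intro h <;> linarith]
    rw [re_trace_cts_eq_zero_iff, hT, sub_eq_zero]
end

section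
/- Let d, N, k_1, …, k_N be positive integers and set n = k_1 + ⋯ + k_N. Let A = (A_1, …, A_N) be a fusion frame of type (d, k) over ℂ which is a critical point of the fusion frame potential, i.e., A_i S_A (I_d − A_i^* A_i) = 0 for every i, where S_A = Σ_j A_j^* A_j. If A is not tight, i.e., S_A ≠ (n/d)·I_d, then A does not have property 𝒮: there exists a linear subspace Q ⊆ ℂ^d with 0 < dim Q < d such that d · Σ_{i=1}^N dim(𝒮_i ∩ Q) > n · dim Q. -/
open Matrix
open scoped ComplexOrder

/-- `A` is a fusion frame of type `(d, k)` over `ℂ`: each `A_i` has orthonormal rows and the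
frame operator `S_A = Σ_i A_i^* A_i` is positive definite. -/
def IsFusionFrame {d N : ℕ} {k : Fin N → ℕ}
    (A : (i : Fin N) → Matrix (Fin (k i)) (Fin d) ℂ) : Prop :=
  (∀ i, A i * (A i)ᴴ = 1) ∧ (∑ i : Fin N, (A i)ᴴ * A i).PosDef

/-- The subspace `𝒮_i ⊆ ℂ^d` associated to the block `A_i`: the range of `P_i = A_i^* A_i`
(equivalently, the row space of `A_i`). -/
noncomputable def frameSubspace {k d : ℕ}
    (A : Matrix (Fin k) (Fin d) ℂ) : Submodule ℂ (Fin d → ℂ) :=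
  LinearMap.range (Aᴴ * A).mulVecLin

lemma idem_trace_eq {d : ℕ} {E : Matrix (Fin d) (Fin d) ℂ} (h : E * E = E) :
    E.trace = (Module.finrank ℂ (LinearMap.range E.mulVecLin) : ℂ) := by
  have hf : E.mulVecLin ∘ₗ E.mulVecLin = E.mulVecLin := by
    rw [← Matrix.mulVecLin_mul, h]
  have hproj : LinearMap.IsProj (LinearMap.range E.mulVecLin) E.mulVecLin :=
    ⟨fun x => LinearMap.mem_range_self _ x, by
      rintro x ⟨y, rfl⟩
      exact DFunLike.congr_fun hf y⟩
  have ht := hproj.trace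
  rw [LinearMap.trace_eq_matrix_trace ℂ (Pi.basisFun ℂ (Fin d)),
    LinearMap.toMatrix_eq_toMatrix', ← Matrix.toLin'_apply', LinearMap.toMatrix'_toLin'] at ht
  exact ht


set_option maxHeartbeats 1000000 in
set_option synthInstance.maxHeartbeats 200000 in
/-- **Non-tight critical points of the fusion frame potential fail property `𝒮`.**
If `A` is a fusion frame which is a critical point of `FFP`, i.e.
`A_i S_A (I − A_i^* A_i) = 0` for every `i`, and `A` is not tight, then there is a proper
nonzero subspace `Q ⊆ ℂ^d` with `d · Σ_i dim(𝒮_i ∩ Q) > n · dim Q`. -/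
theorem critical_not_tight_not_propertyS
    (d N : ℕ) (hd : 0 < d) (hN : 0 < N)
    (k : Fin N → ℕ) (hk : ∀ i, 0 < k i)
    (A : (i : Fin N) → Matrix (Fin (k i)) (Fin d) ℂ)
    (hA : IsFusionFrame A)
    (hcrit : ∀ i, A i * (∑ j : Fin N, (A j)ᴴ * A j) * (1 - (A i)ᴴ * A i) = 0)
    (hnot_tight : ∑ i : Fin N, (A i)ᴴ * A i
      ≠ (((∑ i : Fin N, k i : ℕ) : ℂ) / (d : ℂ)) • (1 : Matrix (Fin d) (Fin d) ℂ)) :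
    ∃ Q : Submodule ℂ (Fin d → ℂ),
      0 < Module.finrank ℂ Q ∧ Module.finrank ℂ Q < d ∧
        (∑ i : Fin N, k i) * Module.finrank ℂ Q
          < d * ∑ i : Fin N, Module.finrank ℂ ↥(frameSubspace (A i) ⊓ Q) := by
  classical
  set P : Fin N → Matrix (Fin d) (Fin d) ℂ := fun i => (A i)ᴴ * A i with hPdef
  set S : Matrix (Fin d) (Fin d) ℂ := ∑ i : Fin N, (A i)ᴴ * A i with hSdef
  have hSsum : S = ∑ i : Fin N, P i := rfl
  have hS : S.IsHermitian := hA.2.1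
  set U : Matrix (Fin d) (Fin d) ℂ := ↑(hS.eigenvectorUnitary) with hUdef
  have hU1 : star U * U = 1 := Unitary.coe_star_mul_self hS.eigenvectorUnitary
  have hU2 : U * star U = 1 := Unitary.coe_mul_star_self hS.eigenvectorUnitary
  set μ : Fin d → ℝ := hS.eigenvalues with hμdef
  have hne : (Finset.univ : Finset (Fin d)).Nonempty := ⟨⟨0, hd⟩, Finset.mem_univ _⟩
  set lam : ℝ := Finset.univ.sup' hne μ with hlamdef
  have hlam_mem : ∃ j, μ j = lam := by
    obtain ⟨j, -, hj⟩ := Finset.exists_mem_eq_sup' hne μ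
    exact ⟨j, hj.symm⟩
  have hle : ∀ j, μ j ≤ lam := fun j => Finset.le_sup' μ (Finset.mem_univ j)
  set D : Matrix (Fin d) (Fin d) ℂ := diagonal (RCLike.ofReal ∘ μ) with hDdef
  have hspec : S = U * D * star U := hS.spectral_theorem
  have hdiagD : star U * S * U = D := by
    rw [hspec]; simp only [← mul_assoc, hU1, one_mul]; rw [mul_assoc, hU1, mul_one]
  set ind : Fin d → ℂ := fun j => if μ j = lam then 1 else 0 with hinddef
  set R : Matrix (Fin d) (Fin d) ℂ := U * diagonal ind * star U with hRdef
  -- conjugation lemmas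
  have hconj : ∀ X Y : Matrix (Fin d) (Fin d) ℂ,
      (U * X * star U) * (U * Y * star U) = U * (X * Y) * star U := by
    intro X Y
    have h1 : (U * X * star U) * (U * Y * star U) = U * (X * ((star U * U) * (Y * star U))) := by
      simp only [mul_assoc]
    rw [h1, hU1, one_mul]
    simp only [mul_assoc]
  have hconj' : ∀ X Y : Matrix (Fin d) (Fin d) ℂ,
      (star U * X * U) * (star U * Y * U) = star U * (X * Y) * U := by
    intro X Y
    have h1 : (star U * X * U) * (star U * Y * U)
        = star U * (X * ((U * star U) * (Y * U))) := by
      simp only [mul_assoc]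
    rw [h1, hU2, one_mul]
    simp only [mul_assoc]
  have htrconj : ∀ X : Matrix (Fin d) (Fin d) ℂ, (U * X * star U).trace = X.trace := by
    intro X
    rw [Matrix.trace_mul_cycle, hU1, one_mul]
  -- basic algebra
  have hindind : (fun j => ind j * ind j) = ind := funext fun j => by
    by_cases hj : μ j = lam <;> simp [hinddef, hj]
  have hRR : R * R = R := by
    rw [hRdef, hconj, diagonal_mul_diagonal, hindind]
  have hSR : S * R = (lam : ℂ) • R := by
    rw [hspec, hRdef, hconj]
    have hfun : (fun j => (RCLike.ofReal ∘ μ) j * ind j) = (lam : ℂ) • ind := funext fun j => by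
      by_cases hj : μ j = lam <;>
        simp [hinddef, hj, Function.comp, Pi.mul_apply, Pi.smul_apply, smul_eq_mul]
    have : D * diagonal ind = (lam : ℂ) • diagonal ind := by
      rw [hDdef, diagonal_mul_diagonal, hfun, diagonal_smul]
    rw [this, Matrix.mul_smul, Matrix.smul_mul]
  -- trace of S
  have htrS : S.trace = ((∑ i : Fin N, k i : ℕ) : ℂ) := by
    rw [hSsum, Matrix.trace_sum]
    push_cast
    refine Finset.sum_congr rfl fun i _ => ?_
    rw [hPdef]
    rw [Matrix.trace_mul_comm, hA.1 i, Matrix.trace_one]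
    simp
  -- commutation of P i with S
  have hPS : ∀ i, P i * S = S * P i := by
    intro i
    have hPh : (P i)ᴴ = P i := by
      rw [hPdef]; simp [Matrix.conjTranspose_mul]
    have h2 : P i * S * (1 - P i) = 0 := by
      have h1 : P i * S * (1 - P i) = (A i)ᴴ * (A i * S * (1 - P i)) := by
        simp only [hPdef, Matrix.mul_assoc]
      rw [h1, hcrit i, Matrix.mul_zero]
    have h3 : P i * S = P i * S * P i := by
      rw [Matrix.mul_sub, Matrix.mul_one] at h2
      linear_combination (norm := noncomm_ring) h2
    have h4 : S * P i = P i * S * P i := by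
      have h5 := congrArg Matrix.conjTranspose h3
      simpa [Matrix.conjTranspose_mul, hPh, hS.eq, Matrix.mul_assoc] using h5
    rw [h3]; exact h4.symm
  -- commutation of P i with R
  have hPR : ∀ i, P i * R = R * P i := by
    intro i
    set C : Matrix (Fin d) (Fin d) ℂ := star U * P i * U with hCdef
    have hP' : U * C * star U = P i := by
      have h1 : U * (star U * P i * U) * star U = (U * star U) * P i * (U * star U) := by
        simp only [mul_assoc]
      rw [hCdef, h1, hU2, one_mul, mul_one]
    have hCD : C * D = D * C := by
      rw [← hdiagD, hCdef, hconj', hconj', hPS i]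
    have hent : ∀ j l, C j l * (μ l : ℂ) = (μ j : ℂ) * C j l := by
      intro j l
      rw [hDdef] at hCD
      have h6 := congrFun (congrFun hCD j) l
      simpa [Matrix.mul_diagonal, Matrix.diagonal_mul, Function.comp] using h6
    have hCind : C * diagonal ind = diagonal ind * C := by
      ext j l
      rw [Matrix.mul_diagonal, Matrix.diagonal_mul]
      by_cases hjl : C j l = 0
      · simp [hjl]
      · have hμ : μ j = μ l := by
          have h7 := hent j l
          have h8 : (μ l : ℂ) = (μ j : ℂ) := by
            rw [mul_comm ((μ j : ℂ)) (C j l)] at h7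
            exact mul_left_cancel₀ hjl h7
          exact_mod_cast h8.symm
        have h9 : ind j = ind l := by simp only [hinddef, hμ]
        rw [h9, mul_comm]
    calc P i * R = (U * C * star U) * (U * diagonal ind * star U) := by rw [hP', hRdef]
      _ = U * (C * diagonal ind) * star U := hconj _ _
      _ = U * (diagonal ind * C) * star U := by rw [hCind]
      _ = (U * diagonal ind * star U) * (U * C * star U) := (hconj _ _).symm
      _ = R * P i := by rw [hP', hRdef]
  -- P i idempotent
  have hPidem : ∀ i, P i * P i = P i := by
    intro i
    have : P i * P i = (A i)ᴴ * ((A i * (A i)ᴴ) * A i) := by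
      simp only [hPdef, Matrix.mul_assoc]
    rw [this, hA.1 i, Matrix.one_mul]
  -- E i := P i * R idempotent
  have hEidem : ∀ i, (P i * R) * (P i * R) = P i * R := by
    intro i
    calc (P i * R) * (P i * R) = P i * (R * P i) * R := by simp only [Matrix.mul_assoc]
      _ = P i * (P i * R) * R := by rw [hPR i]
      _ = (P i * P i) * (R * R) := by simp only [Matrix.mul_assoc]
      _ = P i * R := by rw [hPidem i, hRR]
  -- the subspace Q
  set Q : Submodule ℂ (Fin d → ℂ) := LinearMap.range R.mulVecLin with hQdef
  set m : ℕ := Module.finrank ℂ Q with hmdef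
  have htrR : R.trace = (m : ℂ) := idem_trace_eq hRR
  set r : Fin N → ℕ :=
    fun i => Module.finrank ℂ (LinearMap.range ((P i * R).mulVecLin)) with hrdef
  have htrE : ∀ i, (P i * R).trace = (r i : ℂ) := fun i => idem_trace_eq (hEidem i)
  have hsum : (∑ i, (r i : ℂ)) = (lam : ℂ) * (m : ℂ) := by
    calc (∑ i, (r i : ℂ)) = ∑ i, (P i * R).trace := by
          refine Finset.sum_congr rfl fun i _ => (htrE i).symm
      _ = (∑ i, P i * R).trace := (Matrix.trace_sum _ _).symm
      _ = ((∑ i, P i) * R).trace := by rw [Finset.sum_mul]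
      _ = (S * R).trace := by rw [← hSsum]
      _ = ((lam : ℂ) • R).trace := by rw [hSR]
      _ = (lam : ℂ) * (m : ℂ) := by rw [Matrix.trace_smul, htrR, smul_eq_mul]
  have hrle : ∀ i, r i ≤ Module.finrank ℂ ↥(frameSubspace (A i) ⊓ Q) := by
    intro i
    apply Submodule.finrank_mono
    apply le_inf
    · rw [Matrix.mulVecLin_mul]
      exact LinearMap.range_comp_le_range _ _
    · rw [hPR i, Matrix.mulVecLin_mul]
      exact LinearMap.range_comp_le_range _ _
  -- eigenvector facts
  have hRv : ∀ j : Fin d,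
      R *ᵥ ⇑(hS.eigenvectorBasis j) = fun x => ind j * hS.eigenvectorBasis j x := by
    intro j
    rw [hRdef, ← Matrix.mulVec_mulVec, ← Matrix.mulVec_mulVec,
      Matrix.IsHermitian.star_eigenvectorUnitary_mulVec, Matrix.diagonal_mulVec_single]
    have h20 : (Pi.single j (ind j * 1) : Fin d → ℂ) = ind j • (Pi.single j 1 : Fin d → ℂ) := by
      funext x
      by_cases hx : x = j <;> simp [Pi.single_apply, hx]
    rw [h20, Matrix.mulVec_smul, Matrix.IsHermitian.eigenvectorUnitary_mulVec]
    funext x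
    simp
  have hbne : ∀ j : Fin d, ⇑(hS.eigenvectorBasis j) ≠ 0 := by
    intro j hz
    apply hS.eigenvectorBasis.orthonormal.ne_zero j
    have : (hS.eigenvectorBasis j : EuclideanSpace ℂ (Fin d)) = 0 := by
      ext x; exact congrFun hz x
    simpa using this
  -- m > 0
  obtain ⟨j₀, hj₀⟩ := hlam_mem
  have hm_pos : 0 < m := by
    rw [hmdef]
    rw [Module.finrank_pos_iff_exists_ne_zero]
    refine ⟨⟨⇑(hS.eigenvectorBasis j₀), ⟨⇑(hS.eigenvectorBasis j₀), ?_⟩⟩, ?_⟩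
    · rw [Matrix.mulVecLin_apply, hRv j₀]
      funext x
      simp [hinddef, hj₀]
    · intro hz
      exact hbne j₀ (by simpa using congrArg Subtype.val hz)
  -- trace of S as sum of eigenvalues
  have htrS' : ((∑ i : Fin N, k i : ℕ) : ℂ) = ∑ j, (μ j : ℂ) := by
    rw [← htrS, hspec, htrconj, hDdef, Matrix.trace_diagonal]
    simp [Function.comp]
  -- case split
  by_cases hall : ∀ j, μ j = lam
  · exfalso
    have hD1 : D = (lam : ℂ) • 1 := by
      have h21 : (RCLike.ofReal ∘ μ : Fin d → ℂ) = fun _ => (lam : ℂ) :=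
        funext fun j => by simp [Function.comp, hall j]
      rw [hDdef, h21, ← Matrix.smul_one_eq_diagonal]
    have hS1 : S = (lam : ℂ) • 1 := by
      rw [hspec, hD1]
      simp only [Matrix.mul_smul, Matrix.smul_mul, Matrix.mul_one]
      rw [hU2]
    have hlamval : (lam : ℂ) = ((∑ i : Fin N, k i : ℕ) : ℂ) / (d : ℂ) := by
      have h10 : ((∑ i : Fin N, k i : ℕ) : ℂ) = (lam : ℂ) * d := by
        rw [← htrS, hS1, Matrix.trace_smul, Matrix.trace_one, smul_eq_mul]
        simp
      rw [h10]
      have hd0 : (d : ℂ) ≠ 0 := Nat.cast_ne_zero.mpr hd.ne'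
      field_simp
    exact hnot_tight (by rw [hS1, hlamval])
  · push_neg at hall
    obtain ⟨j₁, hj₁⟩ := hall
    have hm_lt : m < d := by
      by_contra hge
      push_neg at hge
      have hmd : Module.finrank ℂ Q = d := le_antisymm (by
        calc Module.finrank ℂ Q ≤ Module.finrank ℂ (Fin d → ℂ) :=
              Submodule.finrank_le Q
          _ = d := by simp) hge
      have hQtop : Q = ⊤ := by
        apply Submodule.eq_top_of_finrank_eq
        rw [hmd]; simp
      have hsurj : Function.Surjective R.mulVecLin := by
        rw [← LinearMap.range_eq_top, ← hQdef, hQtop]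
      have hinj : Function.Injective R.mulVecLin :=
        (LinearMap.injective_iff_surjective).mpr hsurj
      have hz : R.mulVecLin ⇑(hS.eigenvectorBasis j₁) = R.mulVecLin 0 := by
        rw [Matrix.mulVecLin_apply, hRv j₁, map_zero]
        simp only [hinddef, if_neg hj₁, zero_mul]
        rfl
      exact hbne j₁ (hinj hz)
    have hsumlt : ((∑ i : Fin N, k i : ℕ) : ℝ) < d * lam := by
      have h12 : ((∑ i : Fin N, k i : ℕ) : ℂ) = ((∑ j, μ j : ℝ) : ℂ) := by
        rw [htrS']; push_cast; ring
      have h11 : ((∑ i : Fin N, k i : ℕ) : ℝ) = ∑ j, μ j := by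
        exact_mod_cast h12
      rw [h11]
      calc ∑ j, μ j < ∑ _j : Fin d, lam := by
            apply Finset.sum_lt_sum (fun j _ => hle j)
            exact ⟨j₁, Finset.mem_univ _, lt_of_le_of_ne (hle j₁) hj₁⟩
        _ = d * lam := by rw [Finset.sum_const, Finset.card_univ, Fintype.card_fin,
              nsmul_eq_mul]
    have hsumr : ((∑ i, r i : ℕ) : ℝ) = lam * m := by
      have h13 : ((∑ i, r i : ℕ) : ℂ) = ((lam * m : ℝ) : ℂ) := by
        push_cast
        rw [hsum]
      exact_mod_cast h13
    refine ⟨Q, hm_pos, hm_lt, ?_⟩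
    have h14 : ((∑ i : Fin N, k i : ℕ) : ℝ) * m < (d : ℝ) * ((∑ i, r i : ℕ) : ℝ) := by
      rw [hsumr]
      calc ((∑ i : Fin N, k i : ℕ) : ℝ) * m < (d * lam) * m := by
            apply mul_lt_mul_of_pos_right hsumlt
            exact_mod_cast hm_pos
        _ = (d : ℝ) * (lam * m) := by ring
    have h15 : ((∑ i, r i : ℕ) : ℝ) ≤
        ((∑ i : Fin N, Module.finrank ℂ ↥(frameSubspace (A i) ⊓ Q) : ℕ) : ℝ) := by
      exact_mod_cast Finset.sum_le_sum fun i (_ : i ∈ Finset.univ) => hrle i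
    have h16 : ((∑ i : Fin N, k i : ℕ) : ℝ) * m <
        (d : ℝ) * ((∑ i : Fin N, Module.finrank ℂ ↥(frameSubspace (A i) ⊓ Q) : ℕ) : ℝ) :=
      lt_of_lt_of_le h14 (mul_le_mul_of_nonneg_left h15 (by positivity))
    exact_mod_cast h16
end

section
/- Let 𝕂 = ℝ or ℂ and let d, N, k_1, …, k_N be positive integers. Define EFP : ∏_{i=1}^N 𝕂^{k_i × d} → ℝ by EFP(A_1, …, A_N) := ‖Σ_{i=1}^N A_i^* A_i‖², where ‖·‖ is the Frobenius norm. Then EFP is (real-)Fréchet differentiable at every point A = (A_1, …, A_N), with derivative given by the real-linear map (B_1, …, B_N) ↦ 4 · Re Σ_{i=1}^N tr(B_i^* A_i S_A), where S_A = Σ_j A_j^* A_j. Equivalently, the gradient of EFP at A with respect to the real inner product (X, Y) ↦ Re Σ_i tr(Y_i^* X_i) is (4 A_1 S_A, …, 4 A_N S_A). -/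
open Matrix

attribute [local instance] Matrix.frobeniusSeminormedAddCommGroup
  Matrix.frobeniusNormedAddCommGroup Matrix.frobeniusNormedSpace

section aux

variable {𝕂 : Type*} [RCLike 𝕂] {m n p : Type*} [Fintype m] [Fintype n] [Fintype p]

private lemma frob_norm_sq (M : Matrix m n 𝕂) :
    ‖M‖ ^ 2 = RCLike.re (Matrix.trace (Mᴴ * M)) := by
  have h1 : ‖M‖ ^ 2 = ∑ i, ∑ j, ‖M i j‖ ^ (2 : ℝ) := by
    rw [Matrix.frobenius_norm_def, ← Real.rpow_natCast _ 2,
      ← Real.rpow_mul (by positivity)]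
    norm_num
  rw [h1, Matrix.trace, map_sum]
  rw [Finset.sum_comm]
  congr 1; ext i
  simp only [Matrix.diag_apply, Matrix.mul_apply, Matrix.conjTranspose_apply, map_sum]
  congr 1; ext j
  rw [RCLike.star_def, RCLike.conj_mul, ← RCLike.ofReal_pow, RCLike.ofReal_re]
  simp [Real.rpow_two]

/-- conjTranspose-mul as a real-bilinear continuous map. -/
private noncomputable def ctMul (𝕂 : Type*) [RCLike 𝕂] (m n p : Type*)
    [Fintype m] [Fintype n] [Fintype p] :
    Matrix m n 𝕂 →L[ℝ] Matrix m p 𝕂 →L[ℝ] Matrix n p 𝕂 :=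
  LinearMap.toContinuousLinearMap <|
  { toFun := fun X => LinearMap.toContinuousLinearMap
      { toFun := fun Y => Xᴴ * Y
        map_add' := fun Y Z => by simp [Matrix.mul_add]
        map_smul' := fun r Y => by simp [Matrix.mul_smul] }
    map_add' := fun X Z => by ext Y : 1; simp [Matrix.conjTranspose_add, Matrix.add_mul]
    map_smul' := fun r X => by
        ext Y : 1
        show (r • X)ᴴ * Y = r • (Xᴴ * Y)
        ext i j
        simp only [Matrix.mul_apply, Matrix.conjTranspose_apply, Matrix.smul_apply,
          RCLike.real_smul_eq_coe_mul, star_mul', RCLike.star_def, RCLike.conj_ofReal,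
          Finset.mul_sum]
        exact Finset.sum_congr rfl fun l _ => by ring }

@[simp] private lemma ctMul_apply (X : Matrix m n 𝕂) (Y : Matrix m p 𝕂) :
    ctMul 𝕂 m n p X Y = Xᴴ * Y := rfl

/-- re ∘ trace as a real continuous linear map. -/
private noncomputable def traceRe : Matrix n n 𝕂 →L[ℝ] ℝ :=
  LinearMap.toContinuousLinearMap <|
  { toFun := fun M => RCLike.re (Matrix.trace M)
    map_add' := fun X Y => by simp
    map_smul' := fun r X => by simp [Matrix.trace_smul, RCLike.smul_re] }

@[simp] private lemma traceRe_apply (M : Matrix n n 𝕂) :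
    traceRe M = RCLike.re (Matrix.trace M) := rfl

end aux

/-- **Gradient of the extended fusion frame potential.** The function
`EFP(A) = ‖Σ_i A_i^* A_i‖²` (squared Frobenius norm) on `∏_i 𝕂^{k_i × d}` is real-Fréchet
differentiable at every point `A`, with derivative the real-linear map
`B ↦ 4 · Re Σ_i tr(B_i^* A_i S_A)`, i.e. the gradient with respect to the real inner
product `⟨X, Y⟩ = Re Σ_i tr(Y_i^* X_i)` is `(4 A_1 S_A, …, 4 A_N S_A)`. -/
theorem efp_hasFDerivAt {𝕂 : Type*} [RCLike 𝕂]
    (d N : ℕ) (hd : 0 < d) (hN : 0 < N)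
    (k : Fin N → ℕ) (hk : ∀ i, 0 < k i)
    (A : (i : Fin N) → Matrix (Fin (k i)) (Fin d) 𝕂) :
    ∃ L : ((i : Fin N) → Matrix (Fin (k i)) (Fin d) 𝕂) →L[ℝ] ℝ,
      (∀ B : (i : Fin N) → Matrix (Fin (k i)) (Fin d) 𝕂,
        L B = 4 * RCLike.re (∑ i : Fin N,
          Matrix.trace ((B i)ᴴ * (A i * ∑ j : Fin N, (A j)ᴴ * A j)))) ∧
      HasFDerivAt (fun C : (i : Fin N) → Matrix (Fin (k i)) (Fin d) 𝕂 =>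
          ‖∑ i : Fin N, (C i)ᴴ * C i‖ ^ 2) L A := by
  classical
  set S : Matrix (Fin d) (Fin d) 𝕂 := ∑ j : Fin N, (A j)ᴴ * A j with hSdef
  -- the derivative of the quadratic map `C ↦ ∑ i (C i)ᴴ C i`
  set D : ((i : Fin N) → Matrix (Fin (k i)) (Fin d) 𝕂) →L[ℝ] Matrix (Fin d) (Fin d) 𝕂 :=
    ∑ i : Fin N,
      ((ctMul 𝕂 (Fin (k i)) (Fin d) (Fin d)).precompR ((i : Fin N) → Matrix (Fin (k i)) (Fin d) 𝕂) (A i)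
          (ContinuousLinearMap.proj (R := ℝ) (φ := fun i => Matrix (Fin (k i)) (Fin d) 𝕂) i)
        + (ctMul 𝕂 (Fin (k i)) (Fin d) (Fin d)).precompL ((i : Fin N) → Matrix (Fin (k i)) (Fin d) 𝕂)
          (ContinuousLinearMap.proj (R := ℝ) (φ := fun i => Matrix (Fin (k i)) (Fin d) 𝕂) i) (A i)) with hDdef
  have hproj : ∀ i : Fin N, HasFDerivAt (fun C : (i : Fin N) → Matrix (Fin (k i)) (Fin d) 𝕂 => C i)
      (ContinuousLinearMap.proj (R := ℝ) (φ := fun i => Matrix (Fin (k i)) (Fin d) 𝕂) i) A := fun i => by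
    exact (ContinuousLinearMap.proj (R := ℝ) (φ := fun i => Matrix (Fin (k i)) (Fin d) 𝕂) i).hasFDerivAt
  have hS : HasFDerivAt
      (fun C : (i : Fin N) → Matrix (Fin (k i)) (Fin d) 𝕂 => ∑ i : Fin N, ctMul 𝕂 (Fin (k i)) (Fin d) (Fin d) (C i) (C i)) D A := by
    rw [hDdef]
    exact HasFDerivAt.fun_sum fun i _ =>
      (ctMul 𝕂 (Fin (k i)) (Fin d) (Fin d)).hasFDerivAt_of_bilinear (hproj i) (hproj i)
  have hSA : (∑ i : Fin N, ctMul 𝕂 (Fin (k i)) (Fin d) (Fin d) (A i) (A i)) = S := by simp [hSdef]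
  have h2 : HasFDerivAt
      (fun C : (i : Fin N) → Matrix (Fin (k i)) (Fin d) 𝕂 =>
        ctMul 𝕂 (Fin d) (Fin d) (Fin d) (∑ i : Fin N, ctMul 𝕂 (Fin (k i)) (Fin d) (Fin d) (C i) (C i)) (∑ i : Fin N, ctMul 𝕂 (Fin (k i)) (Fin d) (Fin d) (C i) (C i)))
      ((ctMul 𝕂 (Fin d) (Fin d) (Fin d)).precompR ((i : Fin N) → Matrix (Fin (k i)) (Fin d) 𝕂) S D + (ctMul 𝕂 (Fin d) (Fin d) (Fin d)).precompL ((i : Fin N) → Matrix (Fin (k i)) (Fin d) 𝕂) D S) A := by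
    have := (ctMul 𝕂 (Fin d) (Fin d) (Fin d)).hasFDerivAt_of_bilinear hS hS
    rwa [hSA] at this
  set L : ((i : Fin N) → Matrix (Fin (k i)) (Fin d) 𝕂) →L[ℝ] ℝ :=
    traceRe.comp ((ctMul 𝕂 (Fin d) (Fin d) (Fin d)).precompR ((i : Fin N) → Matrix (Fin (k i)) (Fin d) 𝕂) S D + (ctMul 𝕂 (Fin d) (Fin d) (Fin d)).precompL ((i : Fin N) → Matrix (Fin (k i)) (Fin d) 𝕂) D S) with hLdef
  have h3 : HasFDerivAt
      (fun C : (i : Fin N) → Matrix (Fin (k i)) (Fin d) 𝕂 =>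
        traceRe (ctMul 𝕂 (Fin d) (Fin d) (Fin d) (∑ i : Fin N, ctMul 𝕂 (Fin (k i)) (Fin d) (Fin d) (C i) (C i)) (∑ i : Fin N, ctMul 𝕂 (Fin (k i)) (Fin d) (Fin d) (C i) (C i)))) L A := by
    exact traceRe.hasFDerivAt.comp A h2
  refine ⟨L, ?_, ?_⟩
  · intro B
    have hDB : D B = ∑ i : Fin N, ((A i)ᴴ * B i + (B i)ᴴ * A i) := by
      rw [hDdef]
      refine (ContinuousLinearMap.sum_apply _ _ _).trans ?_
      exact Finset.sum_congr rfl fun i _ => rfl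
    set T : Matrix (Fin d) (Fin d) 𝕂 := ∑ i : Fin N, ((A i)ᴴ * B i + (B i)ᴴ * A i) with hTdef
    have hLB : L B = RCLike.re (Matrix.trace (Sᴴ * T + Tᴴ * S)) := by
      rw [hLdef]
      show RCLike.re (Matrix.trace (((ctMul 𝕂 (Fin d) (Fin d) (Fin d)).precompR ((i : Fin N) → Matrix (Fin (k i)) (Fin d) 𝕂) S D) B + ((ctMul 𝕂 (Fin d) (Fin d) (Fin d)).precompL ((i : Fin N) → Matrix (Fin (k i)) (Fin d) 𝕂) D S) B)) = _
      rw [show ((ctMul 𝕂 (Fin d) (Fin d) (Fin d)).precompR ((i : Fin N) → Matrix (Fin (k i)) (Fin d) 𝕂) S D) B = ctMul 𝕂 (Fin d) (Fin d) (Fin d) S (D B) from rfl,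
        show ((ctMul 𝕂 (Fin d) (Fin d) (Fin d)).precompL ((i : Fin N) → Matrix (Fin (k i)) (Fin d) 𝕂) D S) B = ctMul 𝕂 (Fin d) (Fin d) (Fin d) (D B) S from rfl, hDB]
      simp only [ctMul_apply]
    have hSH : Sᴴ = S := by
      rw [hSdef]
      simp [Matrix.conjTranspose_sum, Matrix.conjTranspose_mul]
    have hTH : Tᴴ = T := by
      rw [hTdef]
      simp only [Matrix.conjTranspose_sum, Matrix.conjTranspose_add, Matrix.conjTranspose_mul,
        Matrix.conjTranspose_conjTranspose]
      exact Finset.sum_congr rfl fun i _ => add_comm _ _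
    have key : ∀ i : Fin N,
        RCLike.re (Matrix.trace ((A i)ᴴ * B i * S)) = RCLike.re (Matrix.trace ((B i)ᴴ * A i * S)) := by
      intro i
      have h4 : ((A i)ᴴ * B i * S)ᴴ = S * ((B i)ᴴ * A i) := by
        simp [Matrix.conjTranspose_mul, hSH, Matrix.mul_assoc]
      have h5 : star (Matrix.trace ((A i)ᴴ * B i * S)) = Matrix.trace ((B i)ᴴ * A i * S) := by
        rw [← Matrix.trace_conjTranspose, h4, Matrix.trace_mul_comm, Matrix.mul_assoc]
      rw [← h5, RCLike.star_def]
      exact (RCLike.conj_re _).symm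
    have hTS : RCLike.re (Matrix.trace (T * S)) =
        2 * RCLike.re (∑ i : Fin N, Matrix.trace ((B i)ᴴ * (A i * S))) := by
      rw [hTdef, Finset.sum_mul]
      simp only [Matrix.add_mul, Matrix.trace_sum, Matrix.trace_add, map_sum, map_add]
      rw [Finset.sum_add_distrib, two_mul]
      congr 1
      · exact Finset.sum_congr rfl fun i _ => by rw [key i, Matrix.mul_assoc]
      · exact Finset.sum_congr rfl fun i _ => by rw [Matrix.mul_assoc]
    rw [hLB, hSH, hTH, Matrix.trace_add, map_add, Matrix.trace_mul_comm S T, hTS]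
    ring
  · have hfun : (fun C : (i : Fin N) → Matrix (Fin (k i)) (Fin d) 𝕂 =>
        ‖∑ i : Fin N, (C i)ᴴ * C i‖ ^ 2) =
        fun C => traceRe (ctMul 𝕂 (Fin d) (Fin d) (Fin d) (∑ i : Fin N, ctMul 𝕂 (Fin (k i)) (Fin d) (Fin d) (C i) (C i)) (∑ i : Fin N, ctMul 𝕂 (Fin (k i)) (Fin d) (Fin d) (C i) (C i))) := by
      funext C
      rw [traceRe_apply, ctMul_apply]
      simp only [ctMul_apply]
      exact frob_norm_sq _
    rw [hfun]
    exact h3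
end

section
/- Let 𝕂 = ℝ or ℂ and let P and Q be d × d matrices over 𝕂 which are orthogonal projections (P = P^* = P² and Q = Q^* = Q²). Then the trace of PQ is a nonnegative real number satisfying tr(PQ) ≥ dim(range(P) ∩ range(Q)), where range denotes the column space (image) of the matrix, and dim is the dimension of the intersection as a 𝕂-linear subspace of 𝕂^d. -/
open Matrix

/-- For orthogonal projections `P, Q` over `𝕂 = ℝ` or `ℂ`, the trace of `PQ` is a
nonnegative real number which is at least `dim(range P ∩ range Q)`. -/
theorem trace_proj_mul_proj_ge_finrank_inf {𝕂 : Type*} [RCLike 𝕂]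
    (d : ℕ) (P Q : Matrix (Fin d) (Fin d) 𝕂)
    (hP_herm : Pᴴ = P) (hP_idem : P * P = P)
    (hQ_herm : Qᴴ = Q) (hQ_idem : Q * Q = Q) :
    ∃ c : ℝ, 0 ≤ c ∧ Matrix.trace (P * Q) = (algebraMap ℝ 𝕂) c ∧
      (Module.finrank 𝕂
          ↥(LinearMap.range P.mulVecLin ⊓ LinearMap.range Q.mulVecLin) : ℝ) ≤ c := by
  classical
  have hext : ∀ (A B : Matrix (Fin d) (Fin d) 𝕂), (∀ x, A *ᵥ x = B *ᵥ x) → A = B :=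
    fun A B h => Matrix.toLin'.injective (LinearMap.ext fun x => by
      simpa [Matrix.toLin'_apply] using h x)
  have hfix : ∀ (M : Matrix (Fin d) (Fin d) 𝕂), M * M = M →
      ∀ y ∈ LinearMap.range M.mulVecLin, M *ᵥ y = y := by
    rintro M hM y ⟨v, rfl⟩
    simp only [mulVecLin_apply, mulVec_mulVec, hM]
  let W' : Submodule 𝕂 (Fin d → 𝕂) :=
    LinearMap.range P.mulVecLin ⊓ LinearMap.range Q.mulVecLin
  let W : Submodule 𝕂 (EuclideanSpace 𝕂 (Fin d)) :=
    W'.comap (WithLp.linearEquiv 2 𝕂 (Fin d → 𝕂)).toLinearMap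
  haveI : CompleteSpace W := inferInstance
  let pr : EuclideanSpace 𝕂 (Fin d) →ₗ[𝕂] EuclideanSpace 𝕂 (Fin d) :=
    (W.subtypeL ∘L W.orthogonalProjectionOnto : _ →L[𝕂] _).toLinearMap
  have hpr_mem : ∀ x, pr x ∈ W := fun x => (W.orthogonalProjectionOnto x).2
  have hpr_id : ∀ x ∈ W, pr x = x := fun x hx => by
    simp only [pr, ContinuousLinearMap.coe_comp, LinearMap.coe_comp, Function.comp_apply,
      Submodule.coe_subtypeL, Submodule.coe_subtype, ContinuousLinearMap.coe_coe]
    rw [← Submodule.starProjection_apply, W.starProjection_eq_self_iff.2 hx]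
  let R : Matrix (Fin d) (Fin d) 𝕂 := Matrix.toEuclideanLin.symm pr
  have hRlin : Matrix.toEuclideanLin R = pr := Matrix.toEuclideanLin.apply_symm_apply pr
  have hRapp : ∀ x : Fin d → 𝕂, R *ᵥ x = WithLp.ofLp (pr (WithLp.toLp 2 x)) := by
    intro x; rw [← hRlin]; rfl
  have hRmem : ∀ x : Fin d → 𝕂, R *ᵥ x ∈ W' := fun x => by rw [hRapp]; exact hpr_mem _
  have hRid : ∀ x : Fin d → 𝕂, x ∈ W' → R *ᵥ x = x := fun x hx => by
    rw [hRapp, hpr_id _ hx]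
  -- matrix relations
  have hPR : P * R = R := hext _ _ fun x => by
    rw [← mulVec_mulVec]
    exact hfix P hP_idem _ ((hRmem x).1)
  have hQR : Q * R = R := hext _ _ fun x => by
    rw [← mulVec_mulVec]
    exact hfix Q hQ_idem _ ((hRmem x).2)
  have hRR : R * R = R := hext _ _ fun x => by
    rw [← mulVec_mulVec]
    exact hRid _ (hRmem x)
  -- R is hermitian
  have hR_herm : Rᴴ = R := by
    apply Matrix.toEuclideanLin.injective
    rw [Matrix.toEuclideanLin_conjTranspose_eq_adjoint, hRlin]
    exact ((LinearMap.eq_adjoint_iff pr pr).2 fun x y =>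
      W.inner_starProjection_left_eq_right x y).symm
  have hRP : R * P = R := by
    have := congrArg conjTranspose hPR
    rwa [conjTranspose_mul, hR_herm, hP_herm] at this
  have hRQ : R * Q = R := by
    have := congrArg conjTranspose hQR
    rwa [conjTranspose_mul, hR_herm, hQ_herm] at this
  -- trace of R = finrank W
  have hproj : LinearMap.IsProj W pr := ⟨hpr_mem, hpr_id⟩
  have htrR : Matrix.trace R = (Module.finrank 𝕂 W : 𝕂) := by
    have h1 := hproj.trace
    rw [LinearMap.trace_eq_matrix_trace 𝕂 (PiLp.basisFun 2 𝕂 (Fin d)) pr] at h1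
    have h2 : LinearMap.toMatrix (PiLp.basisFun 2 𝕂 (Fin d)) (PiLp.basisFun 2 𝕂 (Fin d)) pr
        = R := rfl
    rwa [h2] at h1
  -- the PSD part
  set A := Q * P - R with hA
  have hAHA : Aᴴ * A = P * Q * P - R := by
    have hAH : Aᴴ = P * Q - R := by
      rw [hA, conjTranspose_sub, conjTranspose_mul, hP_herm, hQ_herm, hR_herm]
    rw [hAH, hA]
    rw [Matrix.sub_mul, Matrix.mul_sub, Matrix.mul_sub]
    have e1 : P * Q * (Q * P) = P * Q * P := by
      rw [mul_assoc, ← mul_assoc Q Q P, hQ_idem, ← mul_assoc]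
    have e2 : P * Q * R = R := by rw [mul_assoc, hQR, hPR]
    have e3 : R * (Q * P) = R := by rw [← mul_assoc, hRQ, hRP]
    rw [e1, e2, e3, hRR]
    abel
  -- trace of AᴴA as a sum of square norms
  have htrA : Matrix.trace (Aᴴ * A) =
      RCLike.ofReal (∑ j, ∑ i, ‖A i j‖ ^ 2) := by
    rw [Matrix.trace]
    push_cast
    refine Finset.sum_congr rfl fun j _ => ?_
    rw [Matrix.diag_apply, Matrix.mul_apply]
    refine Finset.sum_congr rfl fun i _ => ?_
    rw [conjTranspose_apply, RCLike.star_def, RCLike.conj_mul]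
  refine ⟨(Module.finrank 𝕂 W : ℝ) + ∑ j, ∑ i, ‖A i j‖ ^ 2, ?_, ?_, ?_⟩
  · positivity
  · have : Matrix.trace (P * Q) = Matrix.trace (P * Q * P) := by
      rw [Matrix.trace_mul_cycle P Q P, hP_idem]
    rw [this, ← sub_add_cancel (P * Q * P) R, Matrix.trace_add, ← hAHA, htrA, htrR,
      RCLike.algebraMap_eq_ofReal]
    push_cast
    ring
  · have : (Module.finrank 𝕂
        ↥(LinearMap.range P.mulVecLin ⊓ LinearMap.range Q.mulVecLin) : ℝ)
        = (Module.finrank 𝕂 W : ℝ) := by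
        rw [show W = W'.map ((WithLp.linearEquiv 2 𝕂 (Fin d → 𝕂)).symm :
            (Fin d → 𝕂) →ₗ[𝕂] EuclideanSpace 𝕂 (Fin d)) from
          Submodule.comap_equiv_eq_map_symm (WithLp.linearEquiv 2 𝕂 (Fin d → 𝕂)) W',
          LinearEquiv.finrank_map_eq]
    rw [this]
    have hs : (0:ℝ) ≤ ∑ j, ∑ i, ‖A i j‖ ^ 2 := by positivity
    linarith
end

section
/- Let 𝕂 = ℝ or ℂ and let A_1, …, A_N be matrices with A_i ∈ 𝕂^{k_i × d}, and set S = Σ_{j=1}^N A_j^* A_j. Fix i and suppose A_i S (I_d − A_i^* A_i) = 0 and A_i A_i^* = I_{k_i}. Then the row space of A_i (equivalently, the range of P_i = A_i^* A_i) is an invariant subspace of S: for every v in the range of P_i, S v is also in the range of P_i. -/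
open Matrix

/-- **Critical point blocks give invariant subspaces.** If `A_i` has orthonormal rows and
`A_i S (I − A_i^* A_i) = 0` where `S = Σ_j A_j^* A_j`, then the range of
`P_i = A_i^* A_i` (the row space of `A_i`) is invariant under `S`. -/
theorem range_invariant_of_critical {𝕂 : Type*} [RCLike 𝕂]
    (d N : ℕ) (k : Fin N → ℕ)
    (A : (j : Fin N) → Matrix (Fin (k j)) (Fin d) 𝕂)
    (i : Fin N)
    (hrows : A i * (A i)ᴴ = 1)
    (hcrit : A i * (∑ j : Fin N, (A j)ᴴ * A j) * (1 - (A i)ᴴ * A i) = 0) :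
    ∀ v : Fin d → 𝕂,
      v ∈ LinearMap.range ((A i)ᴴ * A i).mulVecLin →
        (∑ j : Fin N, (A j)ᴴ * A j) *ᵥ v ∈ LinearMap.range ((A i)ᴴ * A i).mulVecLin := by
  set S : Matrix (Fin d) (Fin d) 𝕂 := ∑ j : Fin N, (A j)ᴴ * A j with hS
  set P : Matrix (Fin d) (Fin d) 𝕂 := (A i)ᴴ * A i with hP
  have hSH : Sᴴ = S := by
    simp [hS, conjTranspose_sum, Matrix.conjTranspose_mul]
  have hPH : Pᴴ = P := by
    simp [hP, Matrix.conjTranspose_mul]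
  -- conjugate transpose of hcrit gives (1 - P) * S * (A i)ᴴ = 0
  have h1 : (1 - P) * S * (A i)ᴴ = 0 := by
    have := congrArg conjTranspose hcrit
    simpa [Matrix.conjTranspose_mul, hSH, hPH, Matrix.mul_assoc] using this
  have h2 : (1 - P) * (S * P) = 0 := by
    have := congrArg (· * A i) h1
    simpa [Matrix.mul_assoc, hP] using this
  have key : P * (S * P) = S * P := by
    rw [sub_mul, one_mul, sub_eq_zero] at h2
    exact h2.symm
  rintro v ⟨w, rfl⟩
  refine ⟨S *ᵥ P.mulVecLin w, ?_⟩
  simp only [mulVecLin_apply, ← Matrix.mulVec_mulVec]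
  rw [Matrix.mulVec_mulVec, Matrix.mulVec_mulVec, Matrix.mul_assoc, key,
    ← Matrix.mulVec_mulVec]
end

section
/- Let A_1, A_2 be 1 × 3 real matrices and A_3 a 2 × 3 real matrix with A_i A_i^T = I for each i (orthonormal rows), and let ℓ_1, ℓ_2 ⊆ ℝ³ be the (one-dimensional) row spaces of A_1, A_2 and S ⊆ ℝ³ the (two-dimensional) row space of A_3. Then (A_1, A_2, A_3) does not have property 𝒮: there exists a linear subspace Q ⊆ ℝ³ with 0 < dim Q < 3 such that 3·(dim(ℓ_1 ∩ Q) + dim(ℓ_2 ∩ Q) + dim(S ∩ Q)) > 4 · dim Q. In fact, any two-dimensional subspace Q containing ℓ_1 and ℓ_2 works, since it must intersect S in a subspace of dimension at least one. -/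
open Matrix Module

private lemma rank_gram {k : ℕ} (B : Matrix (Fin k) (Fin 3) ℝ) (hB : B * Bᵀ = 1) :
    Module.finrank ℝ (LinearMap.range (Bᵀ * B).mulVecLin) = k := by
  have hcomp : B.mulVecLin ∘ₗ Bᵀ.mulVecLin = LinearMap.id := by
    rw [← Matrix.mulVecLin_mul, hB, Matrix.mulVecLin_one]
  have hli : Function.LeftInverse B.mulVecLin Bᵀ.mulVecLin := fun x =>
    congrFun (congrArg DFunLike.coe hcomp) x
  have hsurj : Function.Surjective B.mulVecLin := hli.surjective
  have hinj : Function.Injective Bᵀ.mulVecLin := hli.injective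
  have hr : LinearMap.range (Bᵀ * B).mulVecLin = LinearMap.range Bᵀ.mulVecLin := by
    rw [Matrix.mulVecLin_mul]
    exact LinearMap.range_comp_of_range_eq_top _ (LinearMap.range_eq_top.mpr hsurj)
  rw [hr, LinearMap.finrank_range_of_inj hinj]
  simp

private lemma step_extend (W : Submodule ℝ (Fin 3 → ℝ)) (h : finrank ℝ W < 3) :
    ∃ W', W ≤ W' ∧ finrank ℝ W' = finrank ℝ W + 1 := by
  have hlt : finrank ℝ W < finrank ℝ (Fin 3 → ℝ) := by simpa using h
  obtain ⟨m, hm⟩ := W.exists_of_finrank_lt hlt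
  have hm0 : m ∉ W := by simpa using hm 1 one_ne_zero
  have hne : m ≠ 0 := fun h0 => hm0 (h0 ▸ W.zero_mem)
  refine ⟨W ⊔ (ℝ ∙ m), le_sup_left, ?_⟩
  have hdisj : W ⊓ (ℝ ∙ m) = ⊥ :=
    (Submodule.disjoint_span_singleton.mpr (fun hmem => absurd hmem hm0)).eq_bot
  have := Submodule.finrank_sup_add_finrank_inf_eq W (ℝ ∙ m)
  rw [hdisj, finrank_bot, finrank_span_singleton hne] at this
  omega

private lemma extend_to_two (W : Submodule ℝ (Fin 3 → ℝ)) (h : finrank ℝ W ≤ 2) :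
    ∃ Q, W ≤ Q ∧ finrank ℝ Q = 2 := by
  rcases eq_or_lt_of_le h with h2 | h2
  · exact ⟨W, le_rfl, h2⟩
  · obtain ⟨W1, hW1, e1⟩ := step_extend W (by omega)
    rcases eq_or_lt_of_le (show finrank ℝ W1 ≤ 2 by omega) with h3 | h3
    · exact ⟨W1, hW1, h3⟩
    · obtain ⟨W2, hW2, e2⟩ := step_extend W1 (by omega)
      exact ⟨W2, hW1.trans hW2, by omega⟩

/-- **No tuple of type `(3; 1, 1, 2)` over `ℝ` has property `𝒮`.** Given `A₁, A₂` of size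
`1 × 3` and `A₃` of size `2 × 3` with orthonormal rows, with row spaces `ℓ₁, ℓ₂, S`, any
two-dimensional subspace `Q` containing `ℓ₁` and `ℓ₂` violates property `𝒮` (since `Q`
meets the plane `S` in dimension at least one); in particular such a subspace exists. -/
theorem no_propertyS_112
    (A₁ A₂ : Matrix (Fin 1) (Fin 3) ℝ) (A₃ : Matrix (Fin 2) (Fin 3) ℝ)
    (h₁ : A₁ * A₁ᵀ = 1) (h₂ : A₂ * A₂ᵀ = 1) (h₃ : A₃ * A₃ᵀ = 1) :
    (∀ Q : Submodule ℝ (Fin 3 → ℝ),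
      Module.finrank ℝ Q = 2 →
      LinearMap.range (A₁ᵀ * A₁).mulVecLin ≤ Q →
      LinearMap.range (A₂ᵀ * A₂).mulVecLin ≤ Q →
        1 ≤ Module.finrank ℝ ↥(LinearMap.range (A₃ᵀ * A₃).mulVecLin ⊓ Q) ∧
        4 * Module.finrank ℝ Q
          < 3 * (Module.finrank ℝ ↥(LinearMap.range (A₁ᵀ * A₁).mulVecLin ⊓ Q)
              + Module.finrank ℝ ↥(LinearMap.range (A₂ᵀ * A₂).mulVecLin ⊓ Q)
              + Module.finrank ℝ ↥(LinearMap.range (A₃ᵀ * A₃).mulVecLin ⊓ Q))) ∧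
    ∃ Q : Submodule ℝ (Fin 3 → ℝ),
      0 < Module.finrank ℝ Q ∧ Module.finrank ℝ Q < 3 ∧
        4 * Module.finrank ℝ Q
          < 3 * (Module.finrank ℝ ↥(LinearMap.range (A₁ᵀ * A₁).mulVecLin ⊓ Q)
              + Module.finrank ℝ ↥(LinearMap.range (A₂ᵀ * A₂).mulVecLin ⊓ Q)
              + Module.finrank ℝ ↥(LinearMap.range (A₃ᵀ * A₃).mulVecLin ⊓ Q)) := by
  set L₁ := LinearMap.range (A₁ᵀ * A₁).mulVecLin with hL₁def
  set L₂ := LinearMap.range (A₂ᵀ * A₂).mulVecLin with hL₂def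
  set S := LinearMap.range (A₃ᵀ * A₃).mulVecLin with hSdef
  have r₁ : finrank ℝ L₁ = 1 := rank_gram A₁ h₁
  have r₂ : finrank ℝ L₂ = 1 := rank_gram A₂ h₂
  have rS : finrank ℝ S = 2 := rank_gram A₃ h₃
  have main : ∀ Q : Submodule ℝ (Fin 3 → ℝ), finrank ℝ Q = 2 → L₁ ≤ Q → L₂ ≤ Q →
      1 ≤ finrank ℝ ↥(S ⊓ Q) ∧
      4 * finrank ℝ Q < 3 * (finrank ℝ ↥(L₁ ⊓ Q) + finrank ℝ ↥(L₂ ⊓ Q) + finrank ℝ ↥(S ⊓ Q)) := by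
    intro Q hQ hl1 hl2
    have e1 : L₁ ⊓ Q = L₁ := inf_eq_left.mpr hl1
    have e2 : L₂ ⊓ Q = L₂ := inf_eq_left.mpr hl2
    have hsum := Submodule.finrank_sup_add_finrank_inf_eq S Q
    have hle : finrank ℝ ↥(S ⊔ Q) ≤ 3 := by
      have := Submodule.finrank_le (S ⊔ Q)
      simpa using this
    have hS1 : 1 ≤ finrank ℝ ↥(S ⊓ Q) := by omega
    refine ⟨hS1, ?_⟩
    rw [e1, e2, r₁, r₂, hQ]
    omega
  refine ⟨main, ?_⟩
  have hsup : finrank ℝ ↥(L₁ ⊔ L₂) ≤ 2 := by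
    have := Submodule.finrank_sup_add_finrank_inf_eq L₁ L₂
    omega
  obtain ⟨Q, hQle, hQ2⟩ := extend_to_two (L₁ ⊔ L₂) hsup
  obtain ⟨_, hlt⟩ := main Q hQ2 (le_sup_left.trans hQle) (le_sup_right.trans hQle)
  exact ⟨Q, by omega, by omega, hlt⟩
end
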